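/- If G is a symmetric numerical semigroup with Frobenius number f and multiplicity n₁ (the smallest nonzero element), then for every z ∈ G with z > f, the maximal length ord_G(z) of z (the maximum of Σaᵢ over all representations z = Σ aᵢ nᵢ with aᵢ ∈ ℕ₀, where n₁,…,n_d are the minimal generators) is at least the minimal length min-ord_G(f + n₁) of f + n₁. -/

import Mathlib

/-- The numerical semigroup generated by `n 0, …, n (d-1)`. -/
def semigroupGen (d : ℕ) (n : Fin d → ℕ) : Set ℕ :=
  {z | ∃ a : Fin d → ℕ, ∑ i, a i * n i = z}

/-- The set of lengths `∑ aᵢ` of representations `z = ∑ aᵢ nᵢ`. -/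
def repLengths (d : ℕ) (n : Fin d → ℕ) (z : ℕ) : Set ℕ :=
  {s | ∃ a : Fin d → ℕ, (∑ i, a i * n i = z) ∧ (∑ i, a i = s)}

/-- Membership of an integer in the numerical semigroup. -/
def memZ (d : ℕ) (n : Fin d → ℕ) (z : ℤ) : Prop :=
  ∃ x ∈ semigroupGen d n, (x : ℤ) = z

/-- `G` is symmetric with respect to the Frobenius number `f`. -/
def IsSymmetricWith (d : ℕ) (n : Fin d → ℕ) (f : ℕ) : Prop :=
  ∀ z : ℤ, memZ d n z ↔ ¬ memZ d n ((f : ℤ) - z)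

/-- The given generators are a minimal generating system. -/
def MinimallyGenerated (d : ℕ) (n : Fin d → ℕ) : Prop :=
  ∀ i : Fin d, ¬ ∃ a : Fin d → ℕ, a i = 0 ∧ ∑ j, a j * n j = n i

/-!
Peel copies of `n₁` off `z` as long as possible: `z = w + k n₁` with `w ∈ G` but `w - n₁ ∉ G`.
By symmetry `w' := f + n₁ - w ∈ G`, and `z > f` gives `w' < (k + 1) n₁`, so every factorization
of `w'` has length at most `k`. Gluing factorizations of `w` and `w'` gives one of `f + n₁`, while
those of `w` and `k n₁` give one of `z`: hence `min-ord (f + n₁) ≤ |w| + |w'| ≤ |w| + k ≤ ord z`.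
-/

/-- `w` lies in the Apéry set of `c` in `S`. -/
theorem exists_add_mul_eq_of_apery (S : Set ℕ) {c z : ℕ} (hc : 0 < c) (hz : z ∈ S) :
    ∃ k w, w + k * c = z ∧ w ∈ S ∧ ∀ x ∈ S, x + c ≠ w := by
  induction z using Nat.strong_induction_on with
  | _ z ih =>
    by_cases hsub : ∃ x ∈ S, x + c = z
    · obtain ⟨x, hxS, rfl⟩ := hsub
      obtain ⟨k, w, hwx, hwS, hw⟩ := ih x (by omega) hxS
      exact ⟨k + 1, w, by rw [← hwx]; ring, hwS, hw⟩
    · exact ⟨0, z, by simp, hz, fun x hxS hx => hsub ⟨x, hxS, hx⟩⟩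

section Factorizations

variable {d : ℕ} {n : Fin d → ℕ}

theorem exists_mem_repLengths {x : ℕ} (hx : x ∈ semigroupGen d n) :
    ∃ s, s ∈ repLengths d n x := by
  obtain ⟨a, ha⟩ := hx
  exact ⟨∑ i, a i, a, ha, rfl⟩

theorem add_mem_repLengths {x y s t : ℕ} (hs : s ∈ repLengths d n x)
    (ht : t ∈ repLengths d n y) : s + t ∈ repLengths d n (x + y) := by
  obtain ⟨a, rfl, rfl⟩ := hs
  obtain ⟨b, rfl, rfl⟩ := ht
  refine ⟨a + b, ?_, Finset.sum_add_distrib⟩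
  simp only [Pi.add_apply, add_mul, Finset.sum_add_distrib]

theorem mul_mem_repLengths (i : Fin d) (k : ℕ) : k ∈ repLengths d n (k * n i) := by
  classical
  refine ⟨Pi.single i k, ?_, by simp⟩
  simp [Pi.single_apply, ite_mul]

theorem mul_le_of_mem_repLengths {c x s : ℕ} (hc : ∀ i, c ≤ n i)
    (hs : s ∈ repLengths d n x) : s * c ≤ x := by
  obtain ⟨a, rfl, rfl⟩ := hs
  rw [Finset.sum_mul]
  exact Finset.sum_le_sum fun i _ => Nat.mul_le_mul_left _ (hc i)

theorem IsSymmetricWith.exists_add_eq {f c w : ℕ} (hsym : IsSymmetricWith d n f)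
    (hw : ∀ x ∈ semigroupGen d n, x + c ≠ w) :
    ∃ w' ∈ semigroupGen d n, w + w' = f + c := by
  have hmem : memZ d n ((f : ℤ) + c - w) := by
    rw [hsym, show (f : ℤ) - (f + c - w) = w - c by ring]
    rintro ⟨x, hxG, hx⟩
    exact hw x hxG (by omega)
  obtain ⟨w', hw'G, hw'⟩ := hmem
  exact ⟨w', hw'G, by omega⟩

end Factorizations

theorem stmt_0 (d : ℕ) (hd : 0 < d) (n : Fin d → ℕ)
    (hpos : ∀ i, 0 < n i) (hmono : StrictMono n)
    (f : ℕ)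
    (hsym : IsSymmetricWith d n f)
    (z : ℕ) (hz : z ∈ semigroupGen d n) (hzf : f < z)
    (o m : ℕ)
    (ho : IsGreatest (repLengths d n z) o)
    (hm : IsLeast (repLengths d n (f + n ⟨0, hd⟩)) m) :
    m ≤ o := by
  set i₀ : Fin d := ⟨0, hd⟩
  have hn₁ : ∀ i, n i₀ ≤ n i := fun i => hmono.monotone (Fin.le_def.mpr i.val.zero_le)
  obtain ⟨k, w, hwz, hwG, hw⟩ := exists_add_mul_eq_of_apery _ (hpos i₀) hz
  obtain ⟨w', hw'G, hww'⟩ := hsym.exists_add_eq hw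
  obtain ⟨t, ht⟩ := exists_mem_repLengths hwG
  obtain ⟨t', ht'⟩ := exists_mem_repLengths hw'G
  have ht'k : t' ≤ k := by
    have hw'lt : w' < (k + 1) * n i₀ := by rw [add_mul]; omega
    exact Nat.lt_succ_iff.mp <|
      Nat.lt_of_mul_lt_mul_right ((mul_le_of_mem_repLengths hn₁ ht').trans_lt hw'lt)
  calc m ≤ t + t' := hm.2 (hww' ▸ add_mem_repLengths ht ht')
    _ ≤ t + k := by omega
    _ ≤ o := ho.2 (hwz ▸ add_mem_repLengths ht (mul_mem_repLengths i₀ k))
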